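/- For the 3-dimensional Lauricella structure with Jordan blocks of sizes 2+1 (coordinates u^1,u^2,u^3 with u^2≠0 and u^1≠u^3), the connection with nonzero Christoffel symbols Γ^2_{22} = −2ε₁/u^2, Γ^1_{13} = Γ^2_{23} = −Γ^1_{11} = −Γ^1_{33} = −Γ^2_{12} = ε₃/(u^1−u^3), Γ^3_{11} = Γ^3_{33} = −Γ^3_{13} = 2ε₁/(u^1−u^3), Γ^2_{11} = Γ^2_{33} = −Γ^2_{13} = ε₃u^2/(u^1−u^3)² (and symmetric in lower indices) is flat, i.e. R^k_{ijl} = 0 for all indices. -/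

import Mathlib

/-- Partial derivative of `f` with respect to the `i`-th coordinate at `x`
(coordinates are 0-based: `u^1 = x 0`, `u^2 = x 1`, `u^3 = x 2`). -/
noncomputable def pd (i : Fin 3) (f : (Fin 3 → ℝ) → ℝ) (x : Fin 3 → ℝ) : ℝ :=
  deriv (fun t => f (Function.update x i t)) (x i)

/-!
The hypotheses determine `Γ` completely, symmetry supplying the symbols with unlisted index
orders, so flatness is a finite computation with explicit rational functions. Every symbol is a
constant multiple of `1/(u¹ - u³)`, `u²/(u¹ - u³)²` or `1/u²`, whose partial derivatives are
elementary; as `R^k_{ijl}` is antisymmetric in `i, j`, only the 27 components with `i < j` need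
checking, and each vanishes after clearing denominators.
-/

open Function

lemma fin_three_cases (k : Fin 3) : k = 0 ∨ k = 1 ∨ k = 2 := by
  fin_cases k <;> simp

section pd

lemma pd_eq_of_hasDerivAt {i : Fin 3} {f : (Fin 3 → ℝ) → ℝ} {x : Fin 3 → ℝ} {f' : ℝ}
    (hf : HasDerivAt (fun t => f (update x i t)) f' (x i)) : pd i f x = f' :=
  hf.deriv

lemma pd_eq_zero_of_update_eq {i : Fin 3} {f : (Fin 3 → ℝ) → ℝ} {x : Fin 3 → ℝ}
    (hf : ∀ t, f (update x i t) = f x) : pd i f x = 0 := by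
  simp [pd, hf]

lemma pd_const (i : Fin 3) (c : ℝ) (x : Fin 3 → ℝ) : pd i (fun _ => c) x = 0 :=
  pd_eq_zero_of_update_eq fun _ => rfl

lemma pd_neg (i : Fin 3) (f : (Fin 3 → ℝ) → ℝ) (x : Fin 3 → ℝ) :
    pd i (fun y => -f y) x = -pd i f x := by
  simp [pd]

lemma pd_div_sub (c : ℝ) {x : Fin 3 → ℝ} (h : x 0 ≠ x 2) (j : Fin 3) :
    pd j (fun y => c / (y 0 - y 2)) x = ![-(c / (x 0 - x 2) ^ 2), 0, c / (x 0 - x 2) ^ 2] j := by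
  have h' : x 0 - x 2 ≠ 0 := sub_ne_zero.mpr h
  match j with
  | 0 =>
    refine pd_eq_of_hasDerivAt ?_
    simp only [Matrix.cons_val, update_self, update_of_ne (by decide : (2 : Fin 3) ≠ 0)]
    exact ((hasDerivAt_const (x 0) c).div ((hasDerivAt_id' (x 0)).sub_const (x 2)) h').congr_deriv
      (by ring)
  | 1 => exact pd_eq_zero_of_update_eq fun t => by simp
  | 2 =>
    refine pd_eq_of_hasDerivAt ?_
    simp only [Matrix.cons_val, update_self, update_of_ne (by decide : (0 : Fin 3) ≠ 2)]
    exact ((hasDerivAt_const (x 2) c).div ((hasDerivAt_id' (x 2)).const_sub (x 0)) h').congr_deriv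
      (by ring)

lemma pd_mul_div_sub_sq (c : ℝ) {x : Fin 3 → ℝ} (h : x 0 ≠ x 2) (j : Fin 3) :
    pd j (fun y => c * y 1 / (y 0 - y 2) ^ 2) x =
      ![-(2 * c * x 1 / (x 0 - x 2) ^ 3), c / (x 0 - x 2) ^ 2, 2 * c * x 1 / (x 0 - x 2) ^ 3] j := by
  have h' : (x 0 - x 2) ^ 2 ≠ 0 := pow_ne_zero 2 (sub_ne_zero.mpr h)
  match j with
  | 0 =>
    refine pd_eq_of_hasDerivAt ?_
    simp only [Matrix.cons_val, update_self, update_of_ne (by decide : (1 : Fin 3) ≠ 0),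
      update_of_ne (by decide : (2 : Fin 3) ≠ 0)]
    exact ((hasDerivAt_const (x 0) (c * x 1)).div
      (((hasDerivAt_id' (x 0)).sub_const (x 2)).fun_pow 2) h').congr_deriv (by field_simp; ring)
  | 1 =>
    refine pd_eq_of_hasDerivAt ?_
    simp only [Matrix.cons_val, update_self, update_of_ne (by decide : (0 : Fin 3) ≠ 1),
      update_of_ne (by decide : (2 : Fin 3) ≠ 1)]
    exact (((hasDerivAt_id' (x 1)).const_mul c).div_const ((x 0 - x 2) ^ 2)).congr_deriv
      (by ring)
  | 2 =>
    refine pd_eq_of_hasDerivAt ?_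
    simp only [Matrix.cons_val, update_self, update_of_ne (by decide : (0 : Fin 3) ≠ 2),
      update_of_ne (by decide : (1 : Fin 3) ≠ 2)]
    exact ((hasDerivAt_const (x 2) (c * x 1)).div
      (((hasDerivAt_id' (x 2)).const_sub (x 0)).fun_pow 2) h').congr_deriv (by field_simp; ring)

lemma pd_div_coord_one (c : ℝ) {x : Fin 3 → ℝ} (h : x 1 ≠ 0) (j : Fin 3) :
    pd j (fun y => c / y 1) x = ![0, -(c / x 1 ^ 2), 0] j := by
  match j with
  | 0 => exact pd_eq_zero_of_update_eq fun t => by simp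
  | 1 =>
    refine pd_eq_of_hasDerivAt ?_
    simp only [Matrix.cons_val, update_self]
    exact ((hasDerivAt_const (x 1) c).div (hasDerivAt_id' (x 1)) h).congr_deriv (by ring)
  | 2 => exact pd_eq_zero_of_update_eq fun t => by simp

end pd

section riemann

variable (Γ : Fin 3 → Fin 3 → Fin 3 → (Fin 3 → ℝ) → ℝ) (k i j l : Fin 3) (x : Fin 3 → ℝ)

noncomputable def riemann : ℝ :=
  pd j (fun y => Γ k i l y) x - pd i (fun y => Γ k j l y) x
    + (∑ s : Fin 3, Γ k j s x * Γ s i l x) - (∑ s : Fin 3, Γ k i s x * Γ s j l x)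

lemma riemann_swap : riemann Γ k j i l x = -riemann Γ k i j l x := by
  simp only [riemann]
  ring

lemma riemann_self : riemann Γ k i i l x = 0 := by
  simp [riemann]

lemma riemann_eq_zero_of_forall_lt (h : ∀ k i j l, i < j → riemann Γ k i j l x = 0) :
    riemann Γ k i j l x = 0 := by
  rcases lt_trichotomy i j with hij | rfl | hji
  · exact h k i j l hij
  · exact riemann_self Γ k i l x
  · rw [riemann_swap, h k j i l hji, neg_zero]

end riemann

-- `lauricellaChristoffel ε₁ ε₃ k i l y` is `Γ^k_{il}` at `u = y` (0-based indices).
noncomputable def lauricellaChristoffel (ε₁ ε₃ : ℝ) (k i l : Fin 3) (y : Fin 3 → ℝ) : ℝ :=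
  ![![![-(ε₃ / (y 0 - y 2)), 0, ε₃ / (y 0 - y 2)],
      ![0, 0, 0],
      ![ε₃ / (y 0 - y 2), 0, -(ε₃ / (y 0 - y 2))]],
    ![![ε₃ * y 1 / (y 0 - y 2) ^ 2, -(ε₃ / (y 0 - y 2)), -(ε₃ * y 1 / (y 0 - y 2) ^ 2)],
      ![-(ε₃ / (y 0 - y 2)), -(2 * ε₁ / y 1), ε₃ / (y 0 - y 2)],
      ![-(ε₃ * y 1 / (y 0 - y 2) ^ 2), ε₃ / (y 0 - y 2), ε₃ * y 1 / (y 0 - y 2) ^ 2]],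
    ![![2 * ε₁ / (y 0 - y 2), 0, -(2 * ε₁ / (y 0 - y 2))],
      ![0, 0, 0],
      ![-(2 * ε₁ / (y 0 - y 2)), 0, 2 * ε₁ / (y 0 - y 2)]]] k i l

lemma lauricellaChristoffel_symm (ε₁ ε₃ : ℝ) (k i l : Fin 3) :
    lauricellaChristoffel ε₁ ε₃ k i l = lauricellaChristoffel ε₁ ε₃ k l i := by
  rcases fin_three_cases k with rfl | rfl | rfl <;> rcases fin_three_cases i with rfl | rfl | rfl <;>
    rcases fin_three_cases l with rfl | rfl | rfl <;> rfl

theorem riemann_lauricellaChristoffel_of_lt (ε₁ ε₃ : ℝ) {x : Fin 3 → ℝ} (h1 : x 1 ≠ 0)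
    (h02 : x 0 ≠ x 2) {i j : Fin 3} (hij : i < j) (k l : Fin 3) :
    riemann (lauricellaChristoffel ε₁ ε₃) k i j l x = 0 := by
  rcases fin_three_cases i with rfl | rfl | rfl <;> rcases fin_three_cases j with rfl | rfl | rfl <;>
    first | exact absurd hij (by decide) | skip
  all_goals
    rcases fin_three_cases k with rfl | rfl | rfl <;> rcases fin_three_cases l with rfl | rfl | rfl <;>
    simp only [riemann, lauricellaChristoffel, Fin.sum_univ_three, Matrix.cons_val, pd_neg,
      pd_const, pd_div_sub _ h02, pd_mul_div_sub_sq _ h02, pd_div_coord_one _ h1] <;>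
    field_simp <;> ring

/-- The 3-dimensional Lauricella connection for Jordan blocks of sizes
`2+1` (Section 6.2.2), with the listed nonzero Christoffel symbols, is flat on
`{u² ≠ 0, u¹ ≠ u³}`: its Riemann tensor `R^k_{ijl}` vanishes identically there. -/
theorem statement14 (ε₁ ε₃ : ℝ)
    (Γ : Fin 3 → Fin 3 → Fin 3 → (Fin 3 → ℝ) → ℝ)
    (hsym : ∀ k i j, Γ k i j = Γ k j i)
    -- Γ^1_{..}
    (h000 : ∀ x, Γ 0 0 0 x = -(ε₃ / (x 0 - x 2)))
    (h001 : ∀ x, Γ 0 0 1 x = 0)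
    (h002 : ∀ x, Γ 0 0 2 x = ε₃ / (x 0 - x 2))
    (h011 : ∀ x, Γ 0 1 1 x = 0)
    (h012 : ∀ x, Γ 0 1 2 x = 0)
    (h022 : ∀ x, Γ 0 2 2 x = -(ε₃ / (x 0 - x 2)))
    -- Γ^2_{..}
    (h100 : ∀ x, Γ 1 0 0 x = ε₃ * x 1 / (x 0 - x 2) ^ 2)
    (h101 : ∀ x, Γ 1 0 1 x = -(ε₃ / (x 0 - x 2)))
    (h102 : ∀ x, Γ 1 0 2 x = -(ε₃ * x 1 / (x 0 - x 2) ^ 2))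
    (h111 : ∀ x, Γ 1 1 1 x = -(2 * ε₁ / x 1))
    (h112 : ∀ x, Γ 1 1 2 x = ε₃ / (x 0 - x 2))
    (h122 : ∀ x, Γ 1 2 2 x = ε₃ * x 1 / (x 0 - x 2) ^ 2)
    -- Γ^3_{..}
    (h200 : ∀ x, Γ 2 0 0 x = 2 * ε₁ / (x 0 - x 2))
    (h201 : ∀ x, Γ 2 0 1 x = 0)
    (h202 : ∀ x, Γ 2 0 2 x = -(2 * ε₁ / (x 0 - x 2)))
    (h211 : ∀ x, Γ 2 1 1 x = 0)
    (h212 : ∀ x, Γ 2 1 2 x = 0)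
    (h222 : ∀ x, Γ 2 2 2 x = 2 * ε₁ / (x 0 - x 2)) :
    ∀ x : Fin 3 → ℝ, x 1 ≠ 0 → x 0 ≠ x 2 →
      ∀ k i j l : Fin 3,
        pd j (fun y => Γ k i l y) x - pd i (fun y => Γ k j l y) x
          + (∑ s : Fin 3, Γ k j s x * Γ s i l x)
          - (∑ s : Fin 3, Γ k i s x * Γ s j l x) = 0 := by
  have hΓ : Γ = lauricellaChristoffel ε₁ ε₃ := by
    funext k i l y
    wlog hil : i ≤ l generalizing i l
    · rw [hsym, lauricellaChristoffel_symm]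
      exact this l i (le_of_not_ge hil)
    clear hsym
    rcases fin_three_cases k with rfl | rfl | rfl <;> rcases fin_three_cases i with rfl | rfl | rfl <;>
      rcases fin_three_cases l with rfl | rfl | rfl <;>
      first | exact absurd hil (by decide) | simp [lauricellaChristoffel, *]
  subst hΓ
  intro x h1 h02 k i j l
  exact riemann_eq_zero_of_forall_lt _ k i j l x fun k i j l hij =>
    riemann_lauricellaChristoffel_of_lt ε₁ ε₃ h1 h02 hij k l
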